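/- Second-order trivial-Lagrangian theorem (abstract version): let R be a ℤ/2-graded algebra with operators d_Q (odd differential via Q, Q²=0) and commuting even derivations ∂ˣ_μ, ∂ʸ_μ. Suppose d_Q T^I = i ∂_μ T^{Iμ} and define T₀^I = d_Q B^I + i ∂_μ B^{Iμ} with d_Q B^I among the data. Then D(T₀^I(x), T^J(y)) + D(T^I(x), T₀^J(y)) = s̄ B₀ where D is the graded commutator, B₀ = [B^I(x), T^J(y)] + (−1)^{|I|}[T^I(x), B^J(y)], and s̄ acting on two-point quantities is d_Q + i(∂ˣ_μ applied to the μ-extended argument + graded-sign ∂ʸ_μ term) consistent with the descent structure. -/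
import Mathlib

private lemma aux1 {R : Type*} [Ring R] [Algebra ℂ R] (σ : ℂ) (hσ : σ * σ = 1) (q a s : R)
    (h : q * a - σ • (a * q) = s) : a * q = σ • (q * a) - σ • s := by
  rw [← h, smul_sub, smul_smul, hσ, one_smul]
  abel

private lemma aux2 {R : Type*} [Ring R] [Algebra ℂ R] (σ : ℂ) (hσ : σ * σ = 1) (q a s : R)
    (h : q * a - σ • (a * q) = s) (x : R) :
    a * (q * x) = σ • (q * (a * x)) - σ • (s * x) := by
  rw [← mul_assoc, aux1 σ hσ q a s h, sub_mul, smul_mul_assoc, smul_mul_assoc, mul_assoc]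


/-- Second-order trivial-Lagrangian theorem (abstract version): in a ℤ/2-graded algebra
with odd `Q`, `Q² = 0`, commuting even derivations `∂ˣ_μ`, `∂ʸ_μ` acting on the
respective factors, descent equations `d_Q T^I = i ∂_μ T^{Iμ}`, `d_Q T^{Iμ} = i ∂_ν T^{Iμν}`,
and trivial Lagrangians `T₀^I = d_Q B^I + i ∂_μ B^{Iμ}` (with `|B^I| = |I|+1`), the sum of
graded commutators `D(T₀^I(x),T^J(y)) + D(T^I(x),T₀^J(y))` equals `s̄ B₀`, where
`B₀ = [B^I(x),T^J(y)] + (-1)^{|I|} [T^I(x),B^J(y)]` and `s̄ = d_Q + i δ` with `δ` given by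
`∂ˣ_μ` applied to the μ-extended first slot plus the graded-signed `∂ʸ_μ` term on the
μ-extended second slot, consistently with the descent structure. -/
theorem stmt_15 (R : Type*) [Ring R] [Algebra ℂ R]
    (pI pJ : ℕ)  -- parities |I| and |J|
    (Q TIx TJy BIx BJy T0Ix T0Jy : R)
    (TIμx TJμy BIμx BJμy : Fin 4 → R)
    (TIμνx TJμνy : Fin 4 → Fin 4 → R)
    (Dx Dy : Fin 4 → R →ₗ[ℂ] R)
    -- the graded commutator and the graded differential d_Q
    (br : ℕ → ℕ → R → R → R)
    (hbr : ∀ p q x y, br p q x y = x * y - ((-1 : ℂ) ^ (p * q)) • (y * x))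
    (dQ : ℕ → R → R)
    (hdQ : ∀ p x, dQ p x = Q * x - ((-1 : ℂ) ^ p) • (x * Q))
    (hQ2 : Q * Q = 0)
    -- derivations, commuting, acting only on their own factor and killing Q
    (hDxLeib : ∀ μ (a b : R), Dx μ (a * b) = Dx μ a * b + a * Dx μ b)
    (hDyLeib : ∀ μ (a b : R), Dy μ (a * b) = Dy μ a * b + a * Dy μ b)
    (hDcomm : ∀ μ ν, (Dx μ).comp (Dy ν) = (Dy ν).comp (Dx μ))
    (hDxQ : ∀ μ, Dx μ Q = 0) (hDyQ : ∀ μ, Dy μ Q = 0)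
    (hDxT : ∀ μ, Dx μ TJy = 0) (hDxTμ : ∀ μ ν, Dx μ (TJμy ν) = 0)
    (hDxB : ∀ μ, Dx μ BJy = 0) (hDxBμ : ∀ μ ν, Dx μ (BJμy ν) = 0)
    (hDyT : ∀ μ, Dy μ TIx = 0) (hDyTμ : ∀ μ ν, Dy μ (TIμx ν) = 0)
    (hDyB : ∀ μ, Dy μ BIx = 0) (hDyBμ : ∀ μ ν, Dy μ (BIμx ν) = 0)
    -- descent equations: d_Q T^I = i ∂_μ T^{Iμ}, d_Q T^{Iμ} = i ∂_ν T^{Iμν}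
    (hgaugeI : dQ pI TIx = Complex.I • ∑ μ, Dx μ (TIμx μ))
    (hgaugeJ : dQ pJ TJy = Complex.I • ∑ μ, Dy μ (TJμy μ))
    (hgaugeIμ : ∀ μ, dQ (pI + 1) (TIμx μ) = Complex.I • ∑ ν, Dx ν (TIμνx μ ν))
    (hgaugeJμ : ∀ μ, dQ (pJ + 1) (TJμy μ) = Complex.I • ∑ ν, Dy ν (TJμνy μ ν))
    -- the trivial Lagrangians T₀ = d_Q B + i ∂_μ B^μ, with |B^I| = |I| + 1
    (hT0I : T0Ix = dQ (pI + 1) BIx + Complex.I • ∑ μ, Dx μ (BIμx μ))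
    (hT0J : T0Jy = dQ (pJ + 1) BJy + Complex.I • ∑ μ, Dy μ (BJμy μ)) :
    br pI pJ T0Ix TJy + br pI pJ TIx T0Jy =
      dQ (pI + pJ + 1)
          (br (pI + 1) pJ BIx TJy + ((-1 : ℂ) ^ pI) • br pI (pJ + 1) TIx BJy)
      + Complex.I • ∑ μ,
          Dx μ (br pI pJ (BIμx μ) TJy - ((-1 : ℂ) ^ pI) • br (pI + 1) (pJ + 1) (TIμx μ) BJy)
      + Complex.I • ∑ μ,
          Dy μ (((-1 : ℂ) ^ pI) • br (pI + 1) (pJ + 1) BIx (TJμy μ) + br pI pJ TIx (BJμy μ)) := by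
  subst hT0I hT0J
  simp only [hdQ] at hgaugeI hgaugeJ
  have hσI : ((-1:ℂ)^pI) * ((-1:ℂ)^pI) = 1 := by
    rw [← pow_add]; exact Even.neg_one_pow ⟨pI, rfl⟩
  have hσJ : ((-1:ℂ)^pJ) * ((-1:ℂ)^pJ) = 1 := by
    rw [← pow_add]; exact Even.neg_one_pow ⟨pJ, rfl⟩
  have e1 := aux1 _ hσI Q TIx _ hgaugeI
  have e1x := aux2 _ hσI Q TIx _ hgaugeI
  have e2 := aux1 _ hσJ Q TJy _ hgaugeJ
  have e2x := aux2 _ hσJ Q TJy _ hgaugeJ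
  obtain hI | hI := Nat.even_or_odd pI <;> obtain hJ | hJ := Nat.even_or_odd pJ <;>
  all_goals (
    simp only [hbr, hdQ, hDxLeib, hDyLeib, map_sub, map_add, map_smul,
      hDxT, hDxTμ, hDxB, hDxBμ, hDyT, hDyTμ, hDyB, hDyBμ,
      mul_zero, zero_mul, add_zero, zero_add, smul_zero, sub_zero, zero_sub,
      mul_add, add_mul, mul_sub, sub_mul, smul_add, smul_sub, smul_smul,
      smul_mul_assoc, mul_smul_comm, mul_assoc,
      Finset.sum_add_distrib, Finset.sum_sub_distrib, ← Finset.smul_sum,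
      ← Finset.sum_mul, ← Finset.mul_sum,
      e1, e1x, e2, e2x]
    simp only [pow_add, pow_mul, pow_succ, pow_one, hI.neg_one_pow, hJ.neg_one_pow,
      one_pow, one_mul, mul_one, one_smul, neg_neg, neg_mul, mul_neg, neg_smul, neg_one_sq]
    match_scalars <;> ring)
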